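/- arXiv:2203.15003 — 2 statements merged into one kernel-verified Lean document; each statement's English description precedes it below -/
import Mathlib

section
/- Let A be a unital C*-algebra, β ∈ A with ‖β² - β‖ < ε and max(‖β‖, ‖1-β‖) ≤ N. Define the 4×4 matrix Z_β over A with rows (β, 0, 1-β, 0), (1-β, 0, 0, β), (0, 0, β, 1-β), (0, 1, 0, 0). Then ‖Z_β^T Z_β - I_4‖ < 8ε and ‖Z_β‖ ≤ 4N. -/
-- Equip matrices over the C*-algebra `A` with the (submultiplicative) `L∞` operator
-- norm, a Banach algebra norm on `M₄(A)`.
attribute [local instance] Matrix.linftyOpNormedRing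

set_option maxHeartbeats 1000000

lemma linfty_norm_le_of_rows {A : Type*} [NormedRing A]
    (M : Matrix (Fin 4) (Fin 4) A) (c : ℝ) (hc : 0 ≤ c)
    (h : ∀ i, ∑ j, ‖M i j‖ ≤ c) : ‖M‖ ≤ c := by
  rw [Matrix.linfty_opNorm_def]
  rw [← Real.coe_toNNReal c hc]
  norm_cast
  refine Finset.sup_le fun i _ => ?_
  rw [← NNReal.coe_le_coe]
  push_cast
  rw [Real.coe_toNNReal c hc]
  exact h i

lemma linfty_norm_lt_of_rows {A : Type*} [NormedRing A]
    (M : Matrix (Fin 4) (Fin 4) A) (c : ℝ) (hc : 0 < c)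
    (h : ∀ i, ∑ j, ‖M i j‖ < c) : ‖M‖ < c := by
  rw [Matrix.linfty_opNorm_def]
  rw [← Real.coe_toNNReal c hc.le]
  norm_cast
  rw [Finset.sup_lt_iff (by simpa using hc)]
  intro i _
  rw [← NNReal.coe_lt_coe]
  push_cast
  rw [Real.coe_toNNReal c hc.le]
  exact h i

/-- Let `A` be a unital C*-algebra, `β ∈ A` with `‖β² - β‖ < ε` and
`max(‖β‖, ‖1-β‖) ≤ N`.  With `Z_β` the 4×4 matrix with rows `(β,0,1-β,0)`,
`(1-β,0,0,β)`, `(0,0,β,1-β)`, `(0,1,0,0)`, one has `‖Z_βᵀ Z_β - I₄‖ < 8ε` and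
`‖Z_β‖ ≤ 4N`. -/
theorem Zbeta_estimates
    {A : Type*} [NormedRing A] [StarRing A] [CStarRing A] [CompleteSpace A]
    [NormedAlgebra ℂ A] [StarModule ℂ A] [NormOneClass A]
    (β : A) (ε N : ℝ) (hε : 0 < ε)
    (hβ : ‖β * β - β‖ < ε) (hN : max ‖β‖ ‖1 - β‖ ≤ N) :
    ‖(Matrix.transpose !![β, 0, 1 - β, 0; 1 - β, 0, 0, β; 0, 0, β, 1 - β; 0, 1, 0, 0]) *
        !![β, 0, 1 - β, 0; 1 - β, 0, 0, β; 0, 0, β, 1 - β; 0, 1, 0, 0] -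
        (1 : Matrix (Fin 4) (Fin 4) A)‖ < 8 * ε ∧
      ‖!![β, 0, 1 - β, 0; 1 - β, 0, 0, β; 0, 0, β, 1 - β; 0, 1, 0, 0]‖ ≤ 4 * N := by
  set q := β * β - β with hq
  have hbN : ‖β‖ ≤ N := le_trans (le_max_left _ _) hN
  have h1bN : ‖1 - β‖ ≤ N := le_trans (le_max_right _ _) hN
  have hN1 : (1 : ℝ) ≤ 2 * N := by
    have hsum : (β + (1 - β) : A) = 1 := by abel
    have : ‖(1 : A)‖ ≤ ‖β‖ + ‖1 - β‖ := by
      have h2 := norm_add_le β (1 - β)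
      rwa [hsum] at h2
    rw [norm_one] at this
    linarith
  have hT : (Matrix.transpose !![β, 0, 1 - β, 0; 1 - β, 0, 0, β; 0, 0, β, 1 - β; 0, 1, 0, 0]) =
      !![β, 1 - β, 0, 0; 0, 0, 0, 1; 1 - β, 0, β, 0; 0, β, 1 - β, 0] := by
    ext i j
    fin_cases i <;> fin_cases j <;> rfl
  have hD : (Matrix.transpose !![β, 0, 1 - β, 0; 1 - β, 0, 0, β; 0, 0, β, 1 - β; 0, 1, 0, 0]) *
        !![β, 0, 1 - β, 0; 1 - β, 0, 0, β; 0, 0, β, 1 - β; 0, 1, 0, 0] -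
        (1 : Matrix (Fin 4) (Fin 4) A) =
      !![q + q, 0, -q, -q; 0, 0, 0, 0; -q, 0, q + q, -q; -q, 0, -q, q + q] := by
    rw [hT]
    ext i j
    fin_cases i <;> fin_cases j <;>
      simp [Matrix.mul_apply, Fin.sum_univ_four, Matrix.one_apply, hq,
        Matrix.vecHead, Matrix.vecTail] <;>
      noncomm_ring
  constructor
  · rw [hD]
    refine linfty_norm_lt_of_rows _ _ (by linarith) fun i => ?_
    have hqq : ‖q + q‖ ≤ ‖q‖ + ‖q‖ := norm_add_le _ _
    fin_cases i <;>
      simp [Fin.sum_univ_four, norm_neg] <;> linarith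
  · refine linfty_norm_le_of_rows _ _ (by linarith) fun i => ?_
    fin_cases i <;> simp [Fin.sum_univ_four] <;> linarith
end

section
/- Let M be a metric space, f : M → ℝ an L-Lipschitz function, and T a bounded operator on L²(μ) (for a Borel measure μ on M) with propagation at most r, meaning χ_A T χ_B = 0 whenever the subsets A, B ⊆ M satisfy d(A,B) > r. Let δ ≥ Lr, and for k ∈ ℤ let χ_k be multiplication by the characteristic function of f^{-1}([kδ, (k+1)δ)). Then χ_k T χ_l = 0 whenever |k - l| > 1, and consequently ‖[T, g]‖ ≤ 2δ‖T‖ where g = Σ_k kδ·χ_k (as a multiplication operator). -/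
/-!
Points of the level bands `f⁻¹' [kδ, (k+1)δ)` and `f⁻¹' [lδ, (l+1)δ)` with `|k - l| ≥ 2` satisfy
`|f x - f y| > δ ≥ L r`, so they are more than `r` apart and `T` is tridiagonal with respect to
the band projections `χ k`. Since `G` acts as `c k = kδ` on the range of `χ k`,
`χ k [T, G] = (c (k+1) - c k) χ k T χ (k+1) + (c (k-1) - c k) χ k T χ (k-1)`, whence
`‖χ k [T, G] v‖² ≤ 2 δ² ‖T‖² (‖χ (k+1) v‖² + ‖χ (k-1) v‖²)`; summing over `k` with Parseval's
identity `∑ ‖χ k v‖² = ‖v‖²` gives `‖[T, G] v‖ ≤ 2 δ ‖T‖ ‖v‖`.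
-/

open ContinuousLinearMap

theorem lt_abs_sub_of_mem_Ico_of_one_lt_abs {δ a b : ℝ} {k l : ℤ} (hδ : 0 ≤ δ)
    (hkl : 1 < |k - l|) (ha : a ∈ Set.Ico ((k : ℝ) * δ) (((k : ℝ) + 1) * δ))
    (hb : b ∈ Set.Ico ((l : ℝ) * δ) (((l : ℝ) + 1) * δ)) : δ < |a - b| := by
  obtain ⟨ha₁, ha₂⟩ := ha
  obtain ⟨hb₁, hb₂⟩ := hb
  rcases lt_abs.mp hkl with h | h
  · have h' : (l : ℝ) + 2 ≤ k := by exact_mod_cast (by omega : l + 2 ≤ k)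
    exact lt_abs.mpr (Or.inl (by linarith [mul_le_mul_of_nonneg_right h' hδ]))
  · have h' : (k : ℝ) + 2 ≤ l := by exact_mod_cast (by omega : k + 2 ≤ l)
    exact lt_abs.mpr (Or.inr (by linarith [mul_le_mul_of_nonneg_right h' hδ]))

theorem lt_dist_of_mem_Ico_of_one_lt_abs {M : Type*} [PseudoMetricSpace M] {f : M → ℝ}
    {L r δ : ℝ} (hL : 0 < L) (hδ₀ : 0 ≤ δ) (hδ : L * r ≤ δ)
    (hlip : ∀ x y, |f x - f y| ≤ L * dist x y) {k l : ℤ} (hkl : 1 < |k - l|) {x y : M}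
    (hx : f x ∈ Set.Ico ((k : ℝ) * δ) (((k : ℝ) + 1) * δ))
    (hy : f y ∈ Set.Ico ((l : ℝ) * δ) (((l : ℝ) + 1) * δ)) : r < dist x y :=
  lt_of_mul_lt_mul_left
    ((hδ.trans_lt (lt_abs_sub_of_mem_Ico_of_one_lt_abs hδ₀ hkl hx hy)).trans_le (hlip x y)) hL.le

section Operators

variable {𝕜 E : Type*} [RCLike 𝕜] [NormedAddCommGroup E]

section StarProjection

variable [InnerProductSpace 𝕜 E] [CompleteSpace E]

theorem IsStarProjection.norm_apply_le {p : E →L[𝕜] E} (hp : IsStarProjection p) (x : E) :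
    ‖p x‖ ≤ ‖x‖ := by
  simpa using p.le_of_opNorm_le (IsStarProjection.norm_le p hp) x

theorem IsStarProjection.norm_apply_sq_eq_re_inner {p : E →L[𝕜] E} (hp : IsStarProjection p)
    (x : E) : ‖p x‖ ^ 2 = RCLike.re (inner 𝕜 x (p x)) := by
  have hp' : adjoint p ∘L p = p := by
    rw [← star_eq_adjoint, hp.isSelfAdjoint.star_eq]
    exact hp.isIdempotentElem.eq
  simpa [hp'] using p.apply_norm_sq_eq_inner_adjoint_right x

theorem hasSum_norm_apply_sq_of_isStarProjection {ι : Type*} {χ : ι → E →L[𝕜] E}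
    (hχ : ∀ k, IsStarProjection (χ k)) (hone : ∀ v, HasSum (fun k => χ k v) v) (v : E) :
    HasSum (fun k => ‖χ k v‖ ^ 2) (‖v‖ ^ 2) := by
  have h := RCLike.hasSum_re 𝕜 ((hone v).mapL (innerSL 𝕜 v))
  simp only [innerSL_apply_apply, ← (hχ _).norm_apply_sq_eq_re_inner] at h
  rwa [← inner_self_eq_norm_sq (𝕜 := 𝕜)]

theorem norm_le_of_norm_proj_le_adjacent {χ : ℤ → E →L[𝕜] E} (hχ : ∀ k, IsStarProjection (χ k))
    (hone : ∀ v, HasSum (fun k => χ k v) v) {a : ℝ} (ha : 0 ≤ a) {v w : E}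
    (h : ∀ k, ‖χ k w‖ ≤ a * (‖χ (k + 1) v‖ + ‖χ (k - 1) v‖)) : ‖w‖ ≤ 2 * a * ‖v‖ := by
  have hv := hasSum_norm_apply_sq_of_isStarProjection hχ hone v
  have hv_add : HasSum (fun k => ‖χ (k + 1) v‖ ^ 2) (‖v‖ ^ 2) :=
    (Equiv.addRight (1 : ℤ)).hasSum_iff (f := fun k => ‖χ k v‖ ^ 2) |>.mpr hv
  have hv_sub : HasSum (fun k => ‖χ (k - 1) v‖ ^ 2) (‖v‖ ^ 2) :=
    (Equiv.subRight (1 : ℤ)).hasSum_iff (f := fun k => ‖χ k v‖ ^ 2) |>.mpr hv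
  have hterm : ∀ k, ‖χ k w‖ ^ 2 ≤ 2 * a ^ 2 * (‖χ (k + 1) v‖ ^ 2 + ‖χ (k - 1) v‖ ^ 2) := by
    intro k
    calc ‖χ k w‖ ^ 2 ≤ (a * (‖χ (k + 1) v‖ + ‖χ (k - 1) v‖)) ^ 2 :=
          pow_le_pow_left₀ (norm_nonneg _) (h k) 2
      _ ≤ 2 * a ^ 2 * (‖χ (k + 1) v‖ ^ 2 + ‖χ (k - 1) v‖ ^ 2) := by
          nlinarith [mul_nonneg (sq_nonneg a) (sq_nonneg (‖χ (k + 1) v‖ - ‖χ (k - 1) v‖))]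
  have hsq : ‖w‖ ^ 2 ≤ 2 * a ^ 2 * (‖v‖ ^ 2 + ‖v‖ ^ 2) :=
    hasSum_le hterm (hasSum_norm_apply_sq_of_isStarProjection hχ hone w)
      ((hv_add.add hv_sub).mul_left (2 * a ^ 2))
  refine (pow_le_pow_iff_left₀ (norm_nonneg _) (by positivity) two_ne_zero).mp ?_
  linarith

end StarProjection

section Commutator

variable [NormedSpace 𝕜 E]

def IsTridiagonal (χ : ℤ → E →L[𝕜] E) (T : E →L[𝕜] E) : Prop :=
  ∀ k l : ℤ, 1 < |k - l| → χ k ∘L T ∘L χ l = 0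

variable [NormedSpace ℝ E] [IsScalarTower ℝ 𝕜 E] {ι : Type*} {χ : ι → E →L[𝕜] E} {c : ι → ℝ}
  {G : E →L[𝕜] E}

theorem apply_eq_smul_of_hasSum_smul (hidem : ∀ k, IsIdempotentElem (χ k))
    (horth : Pairwise fun k l => χ k * χ l = 0) (hG : ∀ v, HasSum (fun k => c k • χ k v) (G v))
    (k : ι) (v : E) : χ k (G v) = c k • χ k v := by
  refine ((hG v).mapL (χ k)).unique ?_
  convert hasSum_single k fun l hlk => ?_ using 1
  · rw [map_smul_of_tower, ← mul_apply_eq_comp, (hidem k).eq]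
  · rw [map_smul_of_tower, ← mul_apply_eq_comp, horth hlk.symm, zero_apply, smul_zero]

theorem hasSum_apply_commutator (hidem : ∀ k, IsIdempotentElem (χ k))
    (horth : Pairwise fun k l => χ k * χ l = 0) (hone : ∀ v, HasSum (fun k => χ k v) v)
    (hG : ∀ v, HasSum (fun k => c k • χ k v) (G v)) (T : E →L[𝕜] E) (k : ι) (v : E) :
    HasSum (fun l => (c l - c k) • χ k (T (χ l v))) (χ k ((T ∘L G - G ∘L T) v)) := by
  have hTG : HasSum (fun l => c l • χ k (T (χ l v))) (χ k (T (G v))) := by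
    simpa using (hG v).mapL (χ k ∘L T)
  have hGT : HasSum (fun l => c k • χ k (T (χ l v))) (χ k (G (T v))) := by
    rw [apply_eq_smul_of_hasSum_smul hidem horth hG]
    simpa using ((hone v).mapL (χ k ∘L T)).const_smul (c k)
  simpa [sub_smul] using hTG.sub hGT

end Commutator

theorem IsTridiagonal.proj_apply_commutator [NormedSpace 𝕜 E] [NormedSpace ℝ E]
    [IsScalarTower ℝ 𝕜 E] {χ : ℤ → E →L[𝕜] E} {T : E →L[𝕜] E}
    (hT : IsTridiagonal χ T) (hidem : ∀ k, IsIdempotentElem (χ k))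
    (horth : Pairwise fun k l => χ k * χ l = 0) (hone : ∀ v, HasSum (fun k => χ k v) v)
    {c : ℤ → ℝ} {G : E →L[𝕜] E} (hG : ∀ v, HasSum (fun k => c k • χ k v) (G v)) (k : ℤ)
    (v : E) :
    χ k ((T ∘L G - G ∘L T) v) =
      (c (k + 1) - c k) • χ k (T (χ (k + 1) v)) + (c (k - 1) - c k) • χ k (T (χ (k - 1) v)) := by
  have hvanish : ∀ l ∉ ({k + 1, k - 1} : Finset ℤ), (c l - c k) • χ k (T (χ l v)) = 0 := by
    intro l hl
    simp only [Finset.mem_insert, Finset.mem_singleton, not_or] at hl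
    obtain rfl | hlk := eq_or_ne l k
    · rw [sub_self, zero_smul]
    · have hblock := congr($(hT k l (lt_abs.mpr (by omega))) v)
      simp only [comp_apply, zero_apply] at hblock
      rw [hblock, smul_zero]
  have h := (hasSum_apply_commutator hidem horth hone hG T k v).unique
    (hasSum_sum_of_ne_finset_zero hvanish)
  rwa [Finset.sum_pair (by omega)] at h

theorem IsTridiagonal.norm_commutator_le [InnerProductSpace 𝕜 E] [CompleteSpace E]
    [NormedSpace ℝ E] [IsScalarTower ℝ 𝕜 E] {χ : ℤ → E →L[𝕜] E} {T : E →L[𝕜] E}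
    (hT : IsTridiagonal χ T) (hχ : ∀ k, IsStarProjection (χ k))
    (horth : Pairwise fun k l => χ k * χ l = 0) (hone : ∀ v, HasSum (fun k => χ k v) v)
    {c : ℤ → ℝ} {δ : ℝ} (hc : ∀ k, |c (k + 1) - c k| ≤ δ) {G : E →L[𝕜] E}
    (hG : ∀ v, HasSum (fun k => c k • χ k v) (G v)) :
    ‖T ∘L G - G ∘L T‖ ≤ 2 * δ * ‖T‖ := by
  have hδ : 0 ≤ δ := (abs_nonneg _).trans (hc 0)
  have hc' : ∀ k, |c (k - 1) - c k| ≤ δ := fun k => by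
    simpa [abs_sub_comm] using hc (k - 1)
  have hterm : ∀ {k l : ℤ} {v : E}, |c l - c k| ≤ δ →
      ‖(c l - c k) • χ k (T (χ l v))‖ ≤ δ * ‖T‖ * ‖χ l v‖ := fun hkl => by
    rw [norm_smul, Real.norm_eq_abs, mul_assoc]
    exact mul_le_mul hkl (((hχ _).norm_apply_le _).trans (T.le_opNorm _)) (norm_nonneg _) hδ
  refine opNorm_le_bound _ (by positivity) fun v => ?_
  rw [mul_assoc 2]
  refine norm_le_of_norm_proj_le_adjacent hχ hone (by positivity) fun k => ?_
  rw [hT.proj_apply_commutator (fun k => (hχ k).isIdempotentElem) horth hone hG, mul_add]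
  exact (norm_add_le _ _).trans (add_le_add (hterm (hc k)) (hterm (hc' k)))

end Operators

open ContinuousLinearMap in
theorem finite_propagation_commutator_estimate_general
    {M : Type*} [MetricSpace M]
    {H : Type*} [NormedAddCommGroup H] [InnerProductSpace ℂ H] [CompleteSpace H]
    (f : M → ℝ) (L r δ : ℝ) (hL : 0 < L) (hδpos : 0 < δ)
    (hδ : L * r ≤ δ)
    (hlip : ∀ x y, |f x - f y| ≤ L * dist x y)
    (T : H →L[ℂ] H)
    (χ : ℤ → H →L[ℂ] H)
    (hproj : ∀ k, χ k ∘L χ k = χ k)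
    (hsa : ∀ k, IsSelfAdjoint (χ k))
    (horth : ∀ k l, k ≠ l → χ k ∘L χ l = 0)
    (hone : ∀ v : H, HasSum (fun k : ℤ => χ k v) v)
    (hprop : ∀ k l : ℤ,
      (∀ x ∈ f ⁻¹' Set.Ico ((k : ℝ) * δ) (((k : ℝ) + 1) * δ),
        ∀ y ∈ f ⁻¹' Set.Ico ((l : ℝ) * δ) (((l : ℝ) + 1) * δ), r < dist x y) →
      χ k ∘L T ∘L χ l = 0) :
    (∀ k l : ℤ, 1 < |k - l| → χ k ∘L T ∘L χ l = 0) ∧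
      ∀ G : H →L[ℂ] H,
        (∀ v : H, HasSum (fun k : ℤ => ((k : ℝ) * δ) • χ k v) (G v)) →
        ‖T ∘L G - G ∘L T‖ ≤ 2 * δ * ‖T‖ := by
  have hT : IsTridiagonal χ T := fun k l hkl => hprop k l fun x hx y hy =>
    lt_dist_of_mem_Ico_of_one_lt_abs hL hδpos.le hδ hlip hkl hx hy
  refine ⟨hT, fun G hG => hT.norm_commutator_le (fun k => ⟨hproj k, hsa k⟩) horth hone
    (fun k => ?_) hG⟩
  rw [Int.cast_add, Int.cast_one, add_mul, one_mul, add_sub_cancel_left, abs_of_pos hδpos]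

open ContinuousLinearMap in
/-- Let `f : M → ℝ` be `L`-Lipschitz and `T` a bounded operator on the
`L²`-space `H` with propagation at most `r`: the multiplication operators `χ k` by the
characteristic functions of `f⁻¹([kδ, (k+1)δ))` (which are pairwise orthogonal
self-adjoint projections summing strongly to `1`) satisfy `χ k ∘ T ∘ χ l = 0` whenever
the corresponding level sets are at pairwise distance `> r`.  If `δ ≥ L·r` then
`χ k ∘ T ∘ χ l = 0` whenever `|k - l| > 1`, and consequently `‖[T, g]‖ ≤ 2δ‖T‖`
where `g = ∑ₖ kδ·χ k` (as a multiplication operator). -/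
theorem finite_propagation_commutator_estimate
    {M : Type*} [MetricSpace M]
    {H : Type*} [NormedAddCommGroup H] [InnerProductSpace ℂ H] [CompleteSpace H]
    (f : M → ℝ) (L r δ : ℝ) (hL : 0 < L) (hr : 0 ≤ r) (hδpos : 0 < δ)
    (hδ : L * r ≤ δ)
    (hlip : ∀ x y, |f x - f y| ≤ L * dist x y)
    (T : H →L[ℂ] H)
    (χ : ℤ → H →L[ℂ] H)
    (hproj : ∀ k, χ k ∘L χ k = χ k)
    (hsa : ∀ k, IsSelfAdjoint (χ k))
    (horth : ∀ k l, k ≠ l → χ k ∘L χ l = 0)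
    (hone : ∀ v : H, HasSum (fun k : ℤ => χ k v) v)
    (hprop : ∀ k l : ℤ,
      (∀ x ∈ f ⁻¹' Set.Ico ((k : ℝ) * δ) (((k : ℝ) + 1) * δ),
        ∀ y ∈ f ⁻¹' Set.Ico ((l : ℝ) * δ) (((l : ℝ) + 1) * δ), r < dist x y) →
      χ k ∘L T ∘L χ l = 0) :
    (∀ k l : ℤ, 1 < |k - l| → χ k ∘L T ∘L χ l = 0) ∧
      ∀ G : H →L[ℂ] H,
        (∀ v : H, HasSum (fun k : ℤ => ((k : ℝ) * δ) • χ k v) (G v)) →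
        ‖T ∘L G - G ∘L T‖ ≤ 2 * δ * ‖T‖ :=
  finite_propagation_commutator_estimate_general f L r δ hL hδpos hδ hlip T χ hproj hsa horth hone
    hprop
end
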